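/- There exist universal constants K ≥ 1 and c > 0 such that the following holds. Let μ₀, μ₁, μ₀′, μ₁′ ∈ ℝ^d, Σ ∈ ℝ^{d×d} positive definite, and t ∈ ℝ^d nonzero, and let g_t and g_t′ be the projected one-dimensional mixtures. Suppose √(tᵀΣt) ≥ K · max(|⟨t, μ₀−μ₁⟩|, |⟨t, μ₀′−μ₁′⟩|), and suppose either both ⟨μ₀′,t⟩ and ⟨μ₁′,t⟩ lie in the closed interval with endpoints ⟨μ₀,t⟩ and ⟨μ₁,t⟩, or both ⟨μ₀,t⟩ and ⟨μ₁,t⟩ lie in the closed interval with endpoints ⟨μ₀′,t⟩ and ⟨μ₁′,t⟩. Then ‖g_t − g_t′‖_TV ≥ c · min( 1, (1/(tᵀΣt)) · max(|⟨t, μ₀−μ₁⟩|, |⟨t, μ₀′−μ₁′⟩|) · min_{π ∈ H} max(|⟨t, μ₀−μ′_{π(0)}⟩|, |⟨t, μ₁−μ′_{π(1)}⟩|) ), where H is the set of permutations of {0,1}. -/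

import Mathlib

open MeasureTheory ProbabilityTheory Real
open scoped ENNReal NNReal

/-- Total variation distance: `sup_A (f(A) - f'(A))` over measurable sets `A`. -/
noncomputable def tvDist {Ω : Type*} [MeasurableSpace Ω] (f f' : Measure Ω) : ℝ :=
  ⨆ A : {A : Set Ω // MeasurableSet A}, ((f A.1).toReal - (f' A.1).toReal)

/-- One-dimensional two-component Gaussian mixture with component variance `v`. -/
noncomputable def mix1v (m₀ m₁ : ℝ) (v : ℝ≥0) : Measure ℝ :=
  (1/2 : ℝ≥0∞) • gaussianReal m₀ v + (1/2 : ℝ≥0∞) • gaussianReal m₁ v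

/-- One-dimensional mixture `½·N(μ₀,σ²) + ½·N(μ₁,σ²)`. -/
noncomputable def mix1d (μ₀ μ₁ σ : ℝ) : Measure ℝ :=
  mix1v μ₀ μ₁ ⟨σ^2, sq_nonneg σ⟩

/-- Euclidean inner product on `Fin d → ℝ`. -/
noncomputable def edot {d : ℕ} (u v : Fin d → ℝ) : ℝ := ∑ i, u i * v i

/-- Euclidean norm on `Fin d → ℝ`. -/
noncomputable def enorm2 {d : ℕ} (v : Fin d → ℝ) : ℝ := Real.sqrt (∑ i, v i ^ 2)

/-- Density of the `d`-dimensional Gaussian `N(μ, S)`. -/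
noncomputable def gaussianPdf {d : ℕ} (μ : Fin d → ℝ) (S : Matrix (Fin d) (Fin d) ℝ)
    (x : Fin d → ℝ) : ℝ≥0∞ :=
  ENNReal.ofReal (((2 * π) ^ d * S.det) ^ (-(1:ℝ)/2) *
    Real.exp (-(1/2) * edot (x - μ) (S⁻¹.mulVec (x - μ))))

/-- The `d`-dimensional Gaussian measure `N(μ, S)` for positive definite `S`. -/
noncomputable def gaussianND {d : ℕ} (μ : Fin d → ℝ) (S : Matrix (Fin d) (Fin d) ℝ) :
    Measure (Fin d → ℝ) :=
  volume.withDensity (gaussianPdf μ S)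

/-- `d`-dimensional two-component Gaussian mixture `½·N(μ₀,S) + ½·N(μ₁,S)`. -/
noncomputable def mixND {d : ℕ} (μ₀ μ₁ : Fin d → ℝ) (S : Matrix (Fin d) (Fin d) ℝ) :
    Measure (Fin d → ℝ) :=
  (1/2 : ℝ≥0∞) • gaussianND μ₀ S + (1/2 : ℝ≥0∞) • gaussianND μ₁ S

instance mix1v_prob (m₀ m₁ : ℝ) (v : ℝ≥0) : IsProbabilityMeasure (mix1v m₀ m₁ v) := by
  constructor
  rw [mix1v, Measure.add_apply, Measure.smul_apply, Measure.smul_apply]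
  simp [measure_univ]
  rw [ENNReal.inv_two_add_inv_two]

lemma tvDist_ge {Ω : Type*} [MeasurableSpace Ω] (f f' : Measure Ω)
    [IsProbabilityMeasure f] {A : Set Ω} (hA : MeasurableSet A) :
    (f A).toReal - (f' A).toReal ≤ tvDist f f' := by
  apply le_ciSup (f := fun A : {A : Set Ω // MeasurableSet A} =>
    ((f A.1).toReal - (f' A.1).toReal)) (c := (⟨A, hA⟩ : {A : Set Ω // MeasurableSet A}))
  refine ⟨1, ?_⟩
  rintro x ⟨B, rfl⟩
  have h1 : (f B.1).toReal ≤ 1 := by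
    have := prob_le_one (μ := f) (s := B.1)
    simpa using ENNReal.toReal_mono (by simp) this
  have h2 : 0 ≤ (f' B.1).toReal := ENNReal.toReal_nonneg
  simp only
  linarith

lemma prob_compl_toReal {Ω : Type*} [MeasurableSpace Ω] (f : Measure Ω)
    [IsProbabilityMeasure f] {A : Set Ω} (hA : MeasurableSet A) :
    (f Aᶜ).toReal = 1 - (f A).toReal := by
  have h := measure_add_measure_compl (μ := f) hA
  have := ENNReal.toReal_add (measure_ne_top f A) (measure_ne_top f Aᶜ)
  rw [h] at this
  simp at this
  linarith

lemma tvDist_ge' {Ω : Type*} [MeasurableSpace Ω] (f f' : Measure Ω)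
    [IsProbabilityMeasure f] [IsProbabilityMeasure f'] {A : Set Ω} (hA : MeasurableSet A) :
    (f' A).toReal - (f A).toReal ≤ tvDist f f' := by
  have := tvDist_ge f f' hA.compl
  rw [prob_compl_toReal f hA, prob_compl_toReal f' hA] at this
  linarith

noncomputable def nc (v : ℝ≥0) (y : ℝ) : ℝ := ((gaussianReal 0 v) (Set.Iic y)).toReal

lemma nc_diff (v : ℝ≥0) (hv : v ≠ 0) {y z : ℝ} (h : y ≤ z) :
    nc v z - nc v y = ∫ t in y..z, gaussianPDFReal 0 v t := by
  have hu : Set.Iic z = Set.Iic y ∪ Set.Ioc y z := (Set.Iic_union_Ioc_eq_Iic h).symm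
  have hd : Disjoint (Set.Iic y) (Set.Ioc y z) := Set.Iic_disjoint_Ioc le_rfl
  rw [nc, nc, hu, measure_union hd measurableSet_Ioc,
    ENNReal.toReal_add (measure_ne_top _ _) (measure_ne_top _ _)]
  rw [gaussianReal_apply_eq_integral 0 hv (Set.Ioc y z),
    ENNReal.toReal_ofReal (setIntegral_nonneg measurableSet_Ioc
      (fun x _ => gaussianPDFReal_nonneg 0 v x)),
    intervalIntegral.integral_of_le h]
  ring

lemma gr_Iic (m : ℝ) (v : ℝ≥0) (x : ℝ) :
    gaussianReal m v (Set.Iic x) = gaussianReal 0 v (Set.Iic (x - m)) := by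
  have h := gaussianReal_map_add_const (μ := 0) (v := v) m
  rw [zero_add] at h
  rw [← h, Measure.map_apply (measurable_add_const m) measurableSet_Iic]
  congr 1
  ext u
  simp [le_sub_iff_add_le]

lemma gr_Ici (m : ℝ) (v : ℝ≥0) (y : ℝ) :
    gaussianReal m v (Set.Ici y) = gaussianReal (-m) v (Set.Iic (-y)) := by
  have h := gaussianReal_map_const_mul (μ := m) (v := v) (-1)
  have hv : (NNReal.mk ((-1:ℝ)^2) (sq_nonneg _)) = 1 := by ext; norm_num
  rw [hv, one_mul, neg_one_mul] at h
  rw [← h, Measure.map_apply (measurable_const_mul (-1)) measurableSet_Iic]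
  congr 1
  ext u
  simp only [Set.mem_preimage, Set.mem_Iic, Set.mem_Ici]
  constructor <;> intro <;> linarith

lemma mix_toReal (m₀ m₁ : ℝ) (v : ℝ≥0) {A : Set ℝ} :
    ((mix1v m₀ m₁ v) A).toReal
      = ((gaussianReal m₀ v A).toReal + (gaussianReal m₁ v A).toReal) / 2 := by
  rw [mix1v, Measure.add_apply, Measure.smul_apply, Measure.smul_apply, smul_eq_mul, smul_eq_mul,
    ENNReal.toReal_add (ENNReal.mul_ne_top (by norm_num) (measure_ne_top _ _))
      (ENNReal.mul_ne_top (by norm_num) (measure_ne_top _ _)), ENNReal.toReal_mul, ENNReal.toReal_mul]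
  norm_num
  ring


lemma cont_pdf (v : ℝ≥0) : Continuous (gaussianPDFReal 0 v) := by
  unfold gaussianPDFReal
  fun_prop

lemma pdf_ge (v : ℝ≥0) (hv : 0 < (v:ℝ)) {t : ℝ}
    (h1 : -(2 * Real.sqrt v) ≤ t) (h2 : t ≤ -Real.sqrt v) :
    (Real.sqrt (2 * π * v))⁻¹ * Real.exp (-2) ≤ gaussianPDFReal 0 v t := by
  have hσ : 0 < Real.sqrt v := Real.sqrt_pos.mpr hv
  have hσ2 : (Real.sqrt v)^2 = (v:ℝ) := Real.sq_sqrt hv.le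
  unfold gaussianPDFReal
  have hC : (0:ℝ) ≤ (Real.sqrt (2 * π * v))⁻¹ := by positivity
  refine mul_le_mul_of_nonneg_left (Real.exp_le_exp.mpr ?_) hC
  rw [neg_div, neg_le_neg_iff, div_le_iff₀ (by linarith : (0:ℝ) < 2 * v)]
  nlinarith [sq_nonneg (t + Real.sqrt v)]

lemma pdf_shift (v : ℝ≥0) (hv : 0 < (v:ℝ)) {t e : ℝ} (he : 0 ≤ e)
    (h1 : -(2 * Real.sqrt v) ≤ t) (h2 : t + e ≤ -Real.sqrt v) :
    e * ((Real.sqrt (2 * π * v))⁻¹ * Real.exp (-2)) / Real.sqrt v ≤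
      gaussianPDFReal 0 v (t + e) - gaussianPDFReal 0 v t := by
  have hσ : 0 < Real.sqrt v := Real.sqrt_pos.mpr hv
  have hσ2 : (Real.sqrt v)^2 = (v:ℝ) := Real.sq_sqrt hv.le
  have ht : t ≤ -Real.sqrt v := by linarith
  have h2v : (0:ℝ) < 2 * v := by linarith
  set A := -(t + e - 0)^2 / (2 * v) with hA
  set B := -(t - 0)^2 / (2 * v) with hB
  have hAB : e / Real.sqrt v ≤ A - B := by
    rw [hA, hB]
    have hcalc : -(t + e - 0)^2 / (2 * (v:ℝ)) - -(t - 0)^2 / (2 * v)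
        = (-(2*t+e)*e) / (2*v) := by ring
    rw [hcalc, div_le_div_iff₀ hσ h2v]
    nlinarith [mul_nonneg (mul_nonneg he hσ.le)
      (by linarith : (0:ℝ) ≤ -(2*t+e) - 2*Real.sqrt v), hσ2]
  have hB2 : (-2:ℝ) ≤ B := by
    rw [hB, neg_div, neg_le_neg_iff, div_le_iff₀ h2v]
    nlinarith
  have hABnn : 0 ≤ A - B := le_trans (by positivity) hAB
  have hexp : Real.exp B * (A - B + 1) ≤ Real.exp A := by
    calc Real.exp B * (A - B + 1) ≤ Real.exp B * Real.exp (A - B) :=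
          mul_le_mul_of_nonneg_left (by linarith [Real.add_one_le_exp (A - B)])
            (Real.exp_nonneg B)
      _ = Real.exp A := by rw [← Real.exp_add]; ring_nf
  have hEB : Real.exp (-2) ≤ Real.exp B := Real.exp_le_exp.mpr hB2
  have hkey : Real.exp B + (e / Real.sqrt v) * Real.exp (-2) ≤ Real.exp A := by
    have h1' : (e / Real.sqrt v) * Real.exp (-2) ≤ (A - B) * Real.exp B := by
      apply mul_le_mul hAB hEB (Real.exp_nonneg _) hABnn
    nlinarith
  unfold gaussianPDFReal
  rw [← hA, ← hB]
  have hC : (0:ℝ) ≤ (Real.sqrt (2 * π * v))⁻¹ := by positivity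
  have := mul_le_mul_of_nonneg_left hkey hC
  calc e * ((Real.sqrt (2 * π * ↑v))⁻¹ * Real.exp (-2)) / Real.sqrt ↑v
      = (Real.sqrt (2 * π * ↑v))⁻¹ * ((e / Real.sqrt v) * Real.exp (-2)) := by ring
    _ ≤ (Real.sqrt (2 * π * ↑v))⁻¹ * Real.exp A - (Real.sqrt (2 * π * ↑v))⁻¹ * Real.exp B := by
        nlinarith
    _ = (Real.sqrt (2 * π * ↑v))⁻¹ * Real.exp A - (Real.sqrt (2 * π * ↑v))⁻¹ * Real.exp B := rfl

lemma quarter {L R Δ σ : ℝ} (hR0 : 0 ≤ R) (hRL : R ≤ L) (hLR : L + R ≤ Δ) (hΔσ : Δ ≤ σ) :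
    Δ * L / 4 ≤ (L - R) * σ + R * (Δ - R) := by
  rcases le_or_gt R (L/2) with h | h
  · nlinarith
  · nlinarith

lemma numeric (v : ℝ≥0) (hv : 0 < (v:ℝ)) :
    1 / (21 * Real.sqrt v) ≤ (Real.sqrt (2 * π * v))⁻¹ * Real.exp (-2) := by
  have hσ : 0 < Real.sqrt v := Real.sqrt_pos.mpr hv
  have hpi : π < 3.15 := pi_lt_d2
  have hsq : Real.sqrt (2 * π * v) = Real.sqrt (2 * π) * Real.sqrt v := by
    rw [← Real.sqrt_mul (by positivity)]
  have h2pi : Real.sqrt (2 * π) < 2.51 := by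
    rw [show (2.51:ℝ) = Real.sqrt (2.51^2) by rw [Real.sqrt_sq]; norm_num]
    apply Real.sqrt_lt_sqrt (by positivity)
    nlinarith
  have hexp2 : Real.exp 2 < 8 := by
    have h1 : Real.exp 1 < 2.7182818286 := Real.exp_one_lt_d9
    have : Real.exp 2 = Real.exp 1 * Real.exp 1 := by
      rw [← Real.exp_add]; norm_num
    nlinarith [Real.exp_pos 1]
  have hexpneg : (1:ℝ)/8 < Real.exp (-2) := by
    rw [Real.exp_neg]
    rw [div_lt_iff₀ (by norm_num)]
    rw [inv_mul_eq_div, lt_div_iff₀ (Real.exp_pos 2)]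
    linarith
  rw [hsq]
  have hs2 : (0:ℝ) < Real.sqrt (2*π) := by positivity
  rw [div_le_iff₀ (by positivity), mul_inv]
  have : (Real.sqrt (2*π))⁻¹ * (Real.sqrt v)⁻¹ * Real.exp (-2) * (21 * Real.sqrt v)
      = 21 * (Real.sqrt (2*π))⁻¹ * Real.exp (-2) := by
    field_simp
  rw [this]
  have h1 : (2.51:ℝ)⁻¹ < (Real.sqrt (2*π))⁻¹ := by
    apply inv_strictAnti₀ hs2 h2pi
  nlinarith [Real.exp_pos (-2)]

lemma finalarith {L R Δ σ v c2 : ℝ} (hσ : 0 < σ) (hσ2 : σ^2 = v) (hL0 : 0 ≤ L) (hR0 : 0 ≤ R)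
    (hLR : L + R ≤ Δ) (hRL : R ≤ L) (hΔσ : Δ ≤ σ) (hnum : 1/(21*σ) ≤ c2) (hc2pos : 0 < c2) :
    (1/200) * (Δ * L / v) ≤ ((L - R) * c2 + R * ((Δ - R) * c2 / σ)) / 2 := by
  have hv : 0 < v := by nlinarith
  have hΔ0 : 0 ≤ Δ := by linarith
  have hq : Δ * L / 4 ≤ (L - R) * σ + R * (Δ - R) := quarter hR0 hRL hLR hΔσ
  have hstep : (L - R) * c2 + R * ((Δ - R) * c2 / σ) = c2 / σ * ((L - R) * σ + R * (Δ - R)) := by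
    field_simp
  rw [hstep]
  have hσsq : (0:ℝ) < 21 * σ ^ 2 := by nlinarith
  have hc2σ : 1 / (21 * σ ^ 2) ≤ c2 / σ := by
    rw [div_le_div_iff₀ hσsq hσ]
    calc 1 * σ = 1 / (21 * σ) * (21 * σ ^ 2) := by field_simp
      _ ≤ c2 * (21 * σ ^ 2) := mul_le_mul_of_nonneg_right hnum (by positivity)
  have hpos2 : 0 ≤ (L - R) * σ + R * (Δ - R) := by nlinarith
  have hLΔ : 0 ≤ Δ * L := mul_nonneg hΔ0 hL0
  have hveq : v = σ ^ 2 := hσ2.symm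
  have hinvnn : (0:ℝ) ≤ 1 / (21 * σ ^ 2) := by positivity
  calc (1/200) * (Δ * L / v)
      = (Δ * L / 4) * (1 / (50 * v)) := by ring
    _ ≤ (Δ * L / 4) * (1 / (42 * v)) := by
        apply mul_le_mul_of_nonneg_left
          (one_div_le_one_div_of_le (by linarith) (by linarith))
          (div_nonneg hLΔ (by norm_num))
    _ = (Δ * L / 4) * (1 / (21 * σ ^ 2)) / 2 := by rw [hveq]; ring
    _ ≤ ((L - R) * σ + R * (Δ - R)) * (1 / (21 * σ ^ 2)) / 2 := by
        have := mul_le_mul_of_nonneg_right hq hinvnn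
        linarith
    _ ≤ (c2 / σ * ((L - R) * σ + R * (Δ - R))) / 2 := by
        have := mul_le_mul_of_nonneg_right hc2σ hpos2
        linarith

lemma left_est (v : ℝ≥0) (hv : 0 < (v:ℝ)) {a b a' b' : ℝ}
    (h1 : a ≤ a') (h2 : a' ≤ b') (h3 : b' ≤ b)
    (hRL : b - b' ≤ a' - a) (hsb : b - a ≤ Real.sqrt v) :
    (1/200) * ((b - a) * (a' - a) / v) ≤
      ((mix1v a b v) (Set.Iic (a - Real.sqrt v))).toReal
      - ((mix1v a' b' v) (Set.Iic (a - Real.sqrt v))).toReal := by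
  have hσ : 0 < Real.sqrt v := Real.sqrt_pos.mpr hv
  have hσ2 : (Real.sqrt v)^2 = (v:ℝ) := Real.sq_sqrt hv.le
  have hv0 : v ≠ 0 := fun h => by simp [h] at hv
  rw [mix_toReal, mix_toReal, gr_Iic a, gr_Iic b, gr_Iic a', gr_Iic b']
  set σ := Real.sqrt v with hσdef
  set L := a' - a with hLdef
  set R := b - b' with hRdef
  set Δ := b - a with hΔdef
  have e1 : a - σ - a = -σ := by ring
  have e2 : a - σ - b = -σ - Δ := by rw [hΔdef]; ring
  have e3 : a - σ - a' = -σ - L := by rw [hLdef]; ring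
  have e4 : a - σ - b' = -σ - Δ + R := by rw [hΔdef, hRdef]; ring
  have hL0 : 0 ≤ L := by rw [hLdef]; linarith
  have hR0 : 0 ≤ R := by rw [hRdef]; linarith
  have hLR : L + R ≤ Δ := by rw [hLdef, hRdef, hΔdef]; linarith
  have hRL' : R ≤ L := by rw [hLdef, hRdef]; linarith
  have hΔσ : Δ ≤ σ := hsb
  clear_value σ L R Δ
  clear hRL hsb h1 h2 h3
  rw [e1, e2, e3, e4]
  change (1/200) * (Δ * L / (v:ℝ)) ≤ (nc v (-σ) + nc v (-σ - Δ)) / 2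
    - (nc v (-σ - L) + nc v (-σ - Δ + R)) / 2
  set p := gaussianPDFReal 0 v with hp
  have hcont : Continuous p := cont_pdf v
  have hint : ∀ x y : ℝ, IntervalIntegrable p volume x y :=
    fun x y => hcont.intervalIntegrable x y
  have hd1 : nc v (-σ) - nc v (-σ - L) = ∫ t in (-σ - L)..(-σ), p t :=
    nc_diff v hv0 (by linarith)
  have hd2 : nc v (-σ - Δ + R) - nc v (-σ - Δ) = ∫ t in (-σ - Δ)..(-σ - Δ + R), p t :=
    nc_diff v hv0 (by linarith)
  have hsplit : (∫ t in (-σ - L)..(-σ - R), p t) + (∫ t in (-σ - R)..(-σ), p t)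
      = ∫ t in (-σ - L)..(-σ), p t :=
    intervalIntegral.integral_add_adjacent_intervals (hint _ _) (hint _ _)
  set c2 := (Real.sqrt (2 * π * v))⁻¹ * Real.exp (-2) with hc2
  have hnum : 1 / (21 * σ) ≤ c2 := by rw [hσdef]; exact numeric v hv
  have hc2pos : 0 < c2 := by rw [hc2]; positivity
  have hb1 : (L - R) * c2 ≤ ∫ t in (-σ - L)..(-σ - R), p t := by
    have hmono := intervalIntegral.integral_mono_on (μ := volume) (a := -σ - L) (b := -σ - R)
      (by linarith) (intervalIntegrable_const (c := c2)) (hint _ _)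
      (fun x hx => by
        rw [Set.mem_Icc] at hx
        rw [hc2]
        exact pdf_ge v hv (by rw [← hσdef]; linarith [hx.1]) (by rw [← hσdef]; linarith [hx.2]))
    rw [intervalIntegral.integral_const] at hmono
    calc (L - R) * c2 = (-σ - R - (-σ - L)) • c2 := by simp only [smul_eq_mul]; ring
      _ ≤ _ := hmono
  have hshift : (∫ t in (-σ - R)..(-σ), p t)
      = ∫ t in (-σ - Δ)..(-σ - Δ + R), p (t + (Δ - R)) := by
    rw [intervalIntegral.integral_comp_add_right p (Δ - R)]
    congr 1 <;> ring
  have hb2 : R * ((Δ - R) * c2 / σ) ≤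
      (∫ t in (-σ - R)..(-σ), p t) - ∫ t in (-σ - Δ)..(-σ - Δ + R), p t := by
    have hcontshift : Continuous (fun t : ℝ => p (t + (Δ - R))) :=
      hcont.comp (continuous_add_right _)
    rw [hshift, ← intervalIntegral.integral_sub (hcontshift.intervalIntegrable (μ := volume) _ _) (hint _ _)]
    have hmono := intervalIntegral.integral_mono_on (μ := volume) (a := -σ - Δ) (b := -σ - Δ + R)
      (by linarith) (intervalIntegrable_const (c := (Δ - R) * c2 / σ))
      ((hcontshift.sub hcont).intervalIntegrable (μ := volume) _ _)
      (fun x hx => by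
        rw [Set.mem_Icc] at hx
        have hple := pdf_shift v hv (e := Δ - R) (t := x) (by linarith)
          (by rw [← hσdef]; linarith [hx.1]) (by rw [← hσdef]; linarith [hx.2])
        rw [← hσdef, ← hc2] at hple
        exact hple)
    rw [intervalIntegral.integral_const] at hmono
    calc R * ((Δ - R) * c2 / σ) = (-σ - Δ + R - (-σ - Δ)) • ((Δ - R) * c2 / σ) := by
          simp only [smul_eq_mul]; ring
      _ ≤ _ := hmono
  have hcomb : (nc v (-σ) + nc v (-σ - Δ)) / 2 - (nc v (-σ - L) + nc v (-σ - Δ + R)) / 2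
      = ((nc v (-σ) - nc v (-σ - L)) - (nc v (-σ - Δ + R) - nc v (-σ - Δ))) / 2 := by ring
  rw [hcomb, hd1, hd2, ← hsplit]
  have hfin := finalarith hσ hσ2 hL0 hR0 hLR hRL' hΔσ hnum hc2pos
  linarith [hb1, hb2, hfin]

lemma mix1v_comm (m₀ m₁ : ℝ) (v : ℝ≥0) : mix1v m₀ m₁ v = mix1v m₁ m₀ v := add_comm _ _

instance tvNonempty {Ω : Type*} [MeasurableSpace Ω] : Nonempty {A : Set Ω // MeasurableSet A} :=
  ⟨⟨∅, MeasurableSet.empty⟩⟩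

lemma tvDist_comm {Ω : Type*} [MeasurableSpace Ω] (f f' : Measure Ω)
    [IsProbabilityMeasure f] [IsProbabilityMeasure f'] : tvDist f f' = tvDist f' f := by
  have h : ∀ (g g' : Measure Ω), IsProbabilityMeasure g → IsProbabilityMeasure g' →
      tvDist g' g ≤ tvDist g g' := by
    intro g g' hg hg'
    exact ciSup_le fun B => tvDist_ge' g g' B.2
  exact le_antisymm (h f' f ‹_› ‹_›) (h f f' ‹_› ‹_›)

lemma mix_Ici_toReal (m₀ m₁ : ℝ) (v : ℝ≥0) (y : ℝ) :
    ((mix1v m₀ m₁ v) (Set.Ici y)).toReal = ((mix1v (-m₀) (-m₁) v) (Set.Iic (-y))).toReal := by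
  rw [mix_toReal, mix_toReal, gr_Ici m₀, gr_Ici m₁]

lemma right_est (v : ℝ≥0) (hv : 0 < (v:ℝ)) {a b a' b' : ℝ}
    (h1 : a ≤ a') (h2 : a' ≤ b') (h3 : b' ≤ b)
    (hLR' : a' - a ≤ b - b') (hsb : b - a ≤ Real.sqrt v) :
    (1/200) * ((b - a) * (b - b') / v) ≤
      ((mix1v a b v) (Set.Ici (b + Real.sqrt v))).toReal
      - ((mix1v a' b' v) (Set.Ici (b + Real.sqrt v))).toReal := by
  have h := left_est v hv (a := -b) (b := -a) (a' := -b') (b' := -a')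
    (by linarith) (by linarith) (by linarith) (by linarith) (by linarith)
  rw [mix_Ici_toReal a b v, mix_Ici_toReal a' b' v,
    mix1v_comm (-a) (-b), mix1v_comm (-a') (-b')]
  have e : -(b + Real.sqrt v) = -b - Real.sqrt v := by ring
  rw [e]
  calc (1/200) * ((b - a) * (b - b') / v)
      = (1/200) * ((-a - -b) * (-b' - -b) / v) := by ring_nf
    _ ≤ _ := h

lemma core_sorted (v : ℝ≥0) (hv : 0 < (v:ℝ)) {a b a' b' : ℝ}
    (h1 : a ≤ a') (h2 : a' ≤ b') (h3 : b' ≤ b) (hsb : b - a ≤ Real.sqrt v) :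
    (1/200) * ((b - a) * max (a' - a) (b - b') / v) ≤
      tvDist (mix1v a b v) (mix1v a' b' v) := by
  rcases le_total (b - b') (a' - a) with h | h
  · rw [max_eq_left h]
    calc (1/200) * ((b - a) * (a' - a) / v)
        ≤ ((mix1v a b v) (Set.Iic (a - Real.sqrt v))).toReal
          - ((mix1v a' b' v) (Set.Iic (a - Real.sqrt v))).toReal :=
          left_est v hv h1 h2 h3 h hsb
      _ ≤ _ := tvDist_ge _ _ measurableSet_Iic
  · rw [max_eq_right h]
    calc (1/200) * ((b - a) * (b - b') / v)
        ≤ ((mix1v a b v) (Set.Ici (b + Real.sqrt v))).toReal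
          - ((mix1v a' b' v) (Set.Ici (b + Real.sqrt v))).toReal :=
          right_est v hv h1 h2 h3 h hsb
      _ ≤ _ := tvDist_ge _ _ measurableSet_Ici

lemma core (v : ℝ≥0) (hv : 0 < (v:ℝ)) (m₀ m₁ m₀' m₁' : ℝ)
    (hn : m₀' ∈ Set.uIcc m₀ m₁ ∧ m₁' ∈ Set.uIcc m₀ m₁)
    (hsb : max |m₀ - m₁| |m₀' - m₁'| ≤ Real.sqrt v) :
    (1/200) * ((max |m₀ - m₁| |m₀' - m₁'| *
        min (max |m₀ - m₀'| |m₁ - m₁'|) (max |m₀ - m₁'| |m₁ - m₀'|)) / v) ≤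
      tvDist (mix1v m₀ m₁ v) (mix1v m₀' m₁' v) := by
  obtain ⟨hn0, hn1⟩ := hn
  rcases le_total m₀ m₁ with h01 | h01
  · rw [Set.uIcc_of_le h01, Set.mem_Icc] at hn0 hn1
    have habs : |m₀ - m₁| = m₁ - m₀ := by rw [abs_sub_comm, abs_of_nonneg (by linarith)]
    rcases le_total m₀' m₁' with h01' | h01'
    · -- a = m₀, b = m₁, a' = m₀', b' = m₁'
      have habs' : |m₀' - m₁'| = m₁' - m₀' := by rw [abs_sub_comm, abs_of_nonneg (by linarith)]
      have hmax : max |m₀ - m₁| |m₀' - m₁'| = m₁ - m₀ := by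
        rw [habs, habs']; exact max_eq_left (by linarith)
      have hsb' : m₁ - m₀ ≤ Real.sqrt v := hmax ▸ hsb
      have hmm : min (max |m₀ - m₀'| |m₁ - m₁'|) (max |m₀ - m₁'| |m₁ - m₀'|)
          ≤ max (m₀' - m₀) (m₁ - m₁') := by
        refine le_trans (min_le_left _ _) ?_
        rw [abs_sub_comm m₀ m₀', abs_of_nonneg (by linarith : (0:ℝ) ≤ m₀' - m₀),
          abs_of_nonneg (by linarith : (0:ℝ) ≤ m₁ - m₁')]
      have := core_sorted v hv hn0.1 h01' hn1.2 hsb'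
      rw [hmax]
      calc (1/200) * ((m₁ - m₀) * min (max |m₀ - m₀'| |m₁ - m₁'|) (max |m₀ - m₁'| |m₁ - m₀'|) / v)
          ≤ (1/200) * ((m₁ - m₀) * max (m₀' - m₀) (m₁ - m₁') / v) := by
            gcongr <;> first | linarith | exact hmm
        _ ≤ _ := this
    · have habs' : |m₀' - m₁'| = m₀' - m₁' := abs_of_nonneg (by linarith)
      have hmax : max |m₀ - m₁| |m₀' - m₁'| = m₁ - m₀ := by
        rw [habs, habs']; exact max_eq_left (by linarith)
      have hsb' : m₁ - m₀ ≤ Real.sqrt v := hmax ▸ hsb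
      have hmm : min (max |m₀ - m₀'| |m₁ - m₁'|) (max |m₀ - m₁'| |m₁ - m₀'|)
          ≤ max (m₁' - m₀) (m₁ - m₀') := by
        refine le_trans (min_le_right _ _) ?_
        rw [abs_sub_comm m₀ m₁', abs_of_nonneg (by linarith : (0:ℝ) ≤ m₁' - m₀),
          abs_of_nonneg (by linarith : (0:ℝ) ≤ m₁ - m₀')]
      have := core_sorted v hv hn1.1 h01' hn0.2 hsb'
      rw [mix1v_comm m₁' m₀'] at this
      rw [hmax]
      calc (1/200) * ((m₁ - m₀) * min (max |m₀ - m₀'| |m₁ - m₁'|) (max |m₀ - m₁'| |m₁ - m₀'|) / v)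
          ≤ (1/200) * ((m₁ - m₀) * max (m₁' - m₀) (m₁ - m₀') / v) := by
            gcongr <;> first | linarith | exact hmm
        _ ≤ _ := this
  · rw [Set.uIcc_of_ge h01, Set.mem_Icc] at hn0 hn1
    have habs : |m₀ - m₁| = m₀ - m₁ := abs_of_nonneg (by linarith)
    rcases le_total m₀' m₁' with h01' | h01'
    · -- a = m₁, b = m₀, a' = m₀', b' = m₁'
      have habs' : |m₀' - m₁'| = m₁' - m₀' := by rw [abs_sub_comm, abs_of_nonneg (by linarith)]
      have hmax : max |m₀ - m₁| |m₀' - m₁'| = m₀ - m₁ := by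
        rw [habs, habs']; exact max_eq_left (by linarith)
      have hsb' : m₀ - m₁ ≤ Real.sqrt v := hmax ▸ hsb
      have hmm : min (max |m₀ - m₀'| |m₁ - m₁'|) (max |m₀ - m₁'| |m₁ - m₀'|)
          ≤ max (m₀' - m₁) (m₀ - m₁') := by
        refine le_trans (min_le_right _ _) ?_
        rw [abs_of_nonneg (by linarith : (0:ℝ) ≤ m₀ - m₁'),
          abs_sub_comm m₁ m₀', abs_of_nonneg (by linarith : (0:ℝ) ≤ m₀' - m₁), max_comm]
      have := core_sorted v hv hn0.1 h01' hn1.2 hsb'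
      rw [mix1v_comm m₁ m₀] at this
      rw [hmax]
      calc (1/200) * ((m₀ - m₁) * min (max |m₀ - m₀'| |m₁ - m₁'|) (max |m₀ - m₁'| |m₁ - m₀'|) / v)
          ≤ (1/200) * ((m₀ - m₁) * max (m₀' - m₁) (m₀ - m₁') / v) := by
            gcongr <;> first | linarith | exact hmm
        _ ≤ _ := this
    · -- a = m₁, b = m₀, a' = m₁', b' = m₀'
      have habs' : |m₀' - m₁'| = m₀' - m₁' := abs_of_nonneg (by linarith)
      have hmax : max |m₀ - m₁| |m₀' - m₁'| = m₀ - m₁ := by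
        rw [habs, habs']; exact max_eq_left (by linarith)
      have hsb' : m₀ - m₁ ≤ Real.sqrt v := hmax ▸ hsb
      have hmm : min (max |m₀ - m₀'| |m₁ - m₁'|) (max |m₀ - m₁'| |m₁ - m₀'|)
          ≤ max (m₁' - m₁) (m₀ - m₀') := by
        refine le_trans (min_le_left _ _) ?_
        rw [abs_of_nonneg (by linarith : (0:ℝ) ≤ m₀ - m₀'),
          abs_sub_comm m₁ m₁', abs_of_nonneg (by linarith : (0:ℝ) ≤ m₁' - m₁), max_comm]
      have := core_sorted v hv hn1.1 h01' hn0.2 hsb'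
      rw [mix1v_comm m₁ m₀, mix1v_comm m₁' m₀'] at this
      rw [hmax]
      calc (1/200) * ((m₀ - m₁) * min (max |m₀ - m₀'| |m₁ - m₁'|) (max |m₀ - m₁'| |m₁ - m₀'|) / v)
          ≤ (1/200) * ((m₀ - m₁) * max (m₁' - m₁) (m₀ - m₀') / v) := by
            gcongr <;> first | linarith | exact hmm
        _ ≤ _ := this

lemma core2 (v : ℝ≥0) (hv : 0 < (v:ℝ)) (m₀ m₁ m₀' m₁' : ℝ)
    (hn : (m₀' ∈ Set.uIcc m₀ m₁ ∧ m₁' ∈ Set.uIcc m₀ m₁) ∨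
          (m₀ ∈ Set.uIcc m₀' m₁' ∧ m₁ ∈ Set.uIcc m₀' m₁'))
    (hsb : max |m₀ - m₁| |m₀' - m₁'| ≤ Real.sqrt v) :
    (1/200 : ℝ) * min 1 ((1 / (v:ℝ)) * (max |m₀ - m₁| |m₀' - m₁'| *
        min (max |m₀ - m₀'| |m₁ - m₁'|) (max |m₀ - m₁'| |m₁ - m₀'|))) ≤
      tvDist (mix1v m₀ m₁ v) (mix1v m₀' m₁' v) := by
  have hminle : min 1 ((1 / (v:ℝ)) * (max |m₀ - m₁| |m₀' - m₁'| *
        min (max |m₀ - m₀'| |m₁ - m₁'|) (max |m₀ - m₁'| |m₁ - m₀'|)))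
      ≤ (max |m₀ - m₁| |m₀' - m₁'| *
        min (max |m₀ - m₀'| |m₁ - m₁'|) (max |m₀ - m₁'| |m₁ - m₀'|)) / v := by
    refine le_trans (min_le_right _ _) (le_of_eq ?_)
    rw [one_div, inv_mul_eq_div]
  have hstep : (1/200 : ℝ) * min 1 ((1 / (v:ℝ)) * (max |m₀ - m₁| |m₀' - m₁'| *
        min (max |m₀ - m₀'| |m₁ - m₁'|) (max |m₀ - m₁'| |m₁ - m₀'|)))
      ≤ (1/200) * ((max |m₀ - m₁| |m₀' - m₁'| *
        min (max |m₀ - m₀'| |m₁ - m₁'|) (max |m₀ - m₁'| |m₁ - m₀'|)) / v) :=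
    mul_le_mul_of_nonneg_left hminle (by norm_num)
  rcases hn with h | h
  · exact le_trans hstep (core v hv m₀ m₁ m₀' m₁' h hsb)
  · have hsb' : max |m₀' - m₁'| |m₀ - m₁| ≤ Real.sqrt v := by rwa [max_comm]
    have hc := core v hv m₀' m₁' m₀ m₁ h hsb'
    rw [tvDist_comm] at hc
    rw [abs_sub_comm m₀' m₁', max_comm (|m₁' - m₀'|) (|m₀ - m₁|), abs_sub_comm m₁' m₀',
      abs_sub_comm m₀' m₀, abs_sub_comm m₁' m₁, abs_sub_comm m₀' m₁, abs_sub_comm m₁' m₀,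
      max_comm (|m₁ - m₀'|) (|m₀ - m₁'|)] at hc
    exact le_trans hstep hc

lemma edot_sub {d : ℕ} (t x y : Fin d → ℝ) : edot t (x - y) = edot x t - edot y t := by
  unfold edot
  rw [← Finset.sum_sub_distrib]
  exact Finset.sum_congr rfl fun i _ => by simp [Pi.sub_apply]; ring

theorem stmt_12 :
    ∃ K c : ℝ, 1 ≤ K ∧ 0 < c ∧
    ∀ (d : ℕ) (μ₀ μ₁ μ₀' μ₁' : Fin d → ℝ) (S : Matrix (Fin d) (Fin d) ℝ),
      S.PosDef → ∀ t : Fin d → ℝ, t ≠ 0 →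
      Real.sqrt (edot t (S.mulVec t)) ≥
        K * max |edot t (μ₀ - μ₁)| |edot t (μ₀' - μ₁')| →
      ((edot μ₀' t ∈ Set.uIcc (edot μ₀ t) (edot μ₁ t) ∧
          edot μ₁' t ∈ Set.uIcc (edot μ₀ t) (edot μ₁ t)) ∨
       (edot μ₀ t ∈ Set.uIcc (edot μ₀' t) (edot μ₁' t) ∧
          edot μ₁ t ∈ Set.uIcc (edot μ₀' t) (edot μ₁' t))) →
      tvDist (mix1v (edot μ₀ t) (edot μ₁ t) (edot t (S.mulVec t)).toNNReal)
             (mix1v (edot μ₀' t) (edot μ₁' t) (edot t (S.mulVec t)).toNNReal) ≥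
        c * min 1 ((1 / edot t (S.mulVec t)) *
          (max |edot t (μ₀ - μ₁)| |edot t (μ₀' - μ₁')| *
           min (max |edot t (μ₀ - μ₀')| |edot t (μ₁ - μ₁')|)
               (max |edot t (μ₀ - μ₁')| |edot t (μ₁ - μ₀')|))) := by
  refine ⟨1, 1/200, le_refl 1, by norm_num, ?_⟩
  intro d μ₀ μ₁ μ₀' μ₁' S hS t ht hK hnest
  have hV : 0 < edot t (S.mulVec t) := by
    have h := hS.dotProduct_mulVec_pos ht
    have hstar : star t = t := rfl
    rw [hstar] at h
    exact h
  have hcoe : (((edot t (S.mulVec t)).toNNReal : ℝ≥0) : ℝ) = edot t (S.mulVec t) :=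
    Real.coe_toNNReal _ hV.le
  rw [ge_iff_le, one_mul] at hK
  simp only [edot_sub] at hK ⊢
  have hsb : max |edot μ₀ t - edot μ₁ t| |edot μ₀' t - edot μ₁' t|
      ≤ Real.sqrt ((edot t (S.mulVec t)).toNNReal : ℝ) := by
    rw [hcoe]; exact hK
  have h := core2 ((edot t (S.mulVec t)).toNNReal) (by rw [hcoe]; exact hV)
    (edot μ₀ t) (edot μ₁ t) (edot μ₀' t) (edot μ₁' t) hnest hsb
  rw [hcoe] at h
  exact h
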